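/- (Lemma A.1, finite-volume versus infinite-volume 1D propagator) Define Q(x;R,u,L) := L^{−1} Σ_{k∈Λ₁*} e^{i2πkx + iR cos(2π(k+u))} for x ∈ Λ₁, R,u ∈ ℝ, integer L ≥ 2, and I(y;R,u) := ∫_{−1/2}^{1/2} dk e^{i2πky + iR cos(2π(k+u))} for y ∈ ℤ. Then there exist pure constants C, δ₀ > 0 (one may take δ₀ = (ln 2)/2) such that for all integers L ≥ 2, all R, u ∈ ℝ, and all x ∈ Λ₁: |Q(x;R,u,L) − I(x;R,u)| ≤ C e^{−δ₀(L − 4|R|)₊}. -/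

import Mathlib

noncomputable section

namespace KWP

open MeasureTheory Classical

/-- regularized absolute value `⟨r⟩ = √(1+r²)` -/
def reg (r : ℝ) : ℝ := Real.sqrt (1 + r^2)

/-- `e^{2πi t}` -/
def eTwoPiI (t : ℝ) : ℂ := Complex.exp (2*Real.pi*Complex.I*(t:ℂ))

/-- one-dimensional centered periodic lattice of side `L`: representatives in `(-L/2, L/2]` -/
def Lambda1 (L : ℕ) : Finset ℤ :=
  (Finset.Icc (-(L:ℤ)) (L:ℤ)).filter (fun x => -(L:ℤ) < 2*x ∧ 2*x ≤ (L:ℤ))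

/-- the lattice `Λ = Λ₁^d` -/
def LambdaSet (L d : ℕ) : Finset (Fin d → ℤ) :=
  Fintype.piFinset (fun _ => Lambda1 L)

/-- centered representative of `z` modulo `L` -/
def cmod (L : ℕ) (z : ℤ) : ℤ :=
  if 2*(z % (L:ℤ)) ≤ (L:ℤ) then z % (L:ℤ) else z % (L:ℤ) - (L:ℤ)

/-- componentwise centered representative modulo `Λ` -/
def cmodVec (L : ℕ) {d : ℕ} (z : Fin d → ℤ) : Fin d → ℤ := fun i => cmod L (z i)

/-- dual lattice point `m/L ∈ Λ*` associated to `m ∈ Λ` -/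
def dpt (L : ℕ) {d : ℕ} (m : Fin d → ℤ) : Fin d → ℝ := fun i => (m i : ℝ) / (L:ℝ)

/-- membership in the dual lattice `Λ*` -/
def memDual (L d : ℕ) (k : Fin d → ℝ) : Prop := ∃ m ∈ LambdaSet L d, k = dpt L m

/-- normalized sum over the dual lattice, `∫_{Λ*} dk f(k)` (ℂ-valued) -/
def dInt (L d : ℕ) (f : (Fin d → ℝ) → ℂ) : ℂ :=
  ((L:ℂ)^d)⁻¹ * ∑ m ∈ LambdaSet L d, f (dpt L m)

/-- normalized sum over the dual lattice, `∫_{Λ*} dk f(k)` (ℝ-valued) -/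
def dIntR (L d : ℕ) (f : (Fin d → ℝ) → ℝ) : ℝ :=
  ((L:ℝ)^d)⁻¹ * ∑ m ∈ LambdaSet L d, f (dpt L m)

/-- `k · y` for `k ∈ ℝ^d`, `y ∈ ℤ^d` -/
def dotIZ {d : ℕ} (k : Fin d → ℝ) (y : Fin d → ℤ) : ℝ := ∑ i, k i * (y i : ℝ)

/-- the 1D infinite-volume propagator `I(y;R,u)` -/
def I1 (y : ℤ) (R u : ℝ) : ℂ :=
  ∫ k in (-(1:ℝ)/2)..(1/2),
    Complex.exp (2*Real.pi*Complex.I*((k*(y:ℝ) : ℝ):ℂ) +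
      Complex.I*((R*Real.cos (2*Real.pi*(k+u)) : ℝ):ℂ))

/-- the 1D finite-lattice propagator `Q(x;R,u,L)` -/
def Q1 (L : ℕ) (x : ℤ) (R u : ℝ) : ℂ :=
  ((L:ℂ))⁻¹ * ∑ m ∈ Lambda1 L,
    Complex.exp (2*Real.pi*Complex.I*(((m:ℝ)/(L:ℝ)*(x:ℝ) : ℝ):ℂ) +
      Complex.I*((R*Real.cos (2*Real.pi*((m:ℝ)/(L:ℝ)+u)) : ℝ):ℂ))

/-!
With `w = iR/2`,
`e^{iR cos θ} = e^{w e^{iθ}} e^{w e^{-iθ}} = ∑_{a,b ≥ 0} w^{a+b}/(a! b!) e^{i(a-b)θ}`,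
an absolutely convergent double series. Against the phase `e^{2πikx}` the term `(a, b)` oscillates
with the integer frequency `n = x + a - b`, so integrating over `k ∈ [-1/2, 1/2]` keeps exactly the
terms with `n = 0`, while averaging over the dual lattice keeps those with `L ∣ n`. Hence `Q - I`
only involves terms with `0 ≠ n ∈ Lℤ`, and for these `|a - b| ≥ L/2` because `|x| ≤ L/2`.
A Chernoff-type weight `2^{|a-b|} ≥ 2^{L/2}`, with
`t^{a+b} 2^{|a-b|} ≤ (2t)^a (t/2)^b + (t/2)^a (2t)^b`, bounds their total by
`2^{-L/2} · 2 e^{5|R|/4}`, and `5/4 ≤ 2 ln 2`.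
When `L ≤ 4|R|` the trivial bound `‖Q‖ + ‖I‖ ≤ 2` suffices.
-/

lemma Lambda1_eq_Icc (L : ℕ) : Lambda1 L = Finset.Icc ((L : ℤ) / 2 - L + 1) ((L : ℤ) / 2) := by
  ext z
  simp only [Lambda1, Finset.mem_filter, Finset.mem_Icc]
  omega

lemma card_Lambda1 (L : ℕ) : (Lambda1 L).card = L := by
  rw [Lambda1_eq_Icc, Int.card_Icc]
  omega

lemma two_mul_abs_le_of_mem_Lambda1 {L : ℕ} {x : ℤ} (hx : x ∈ Lambda1 L) : 2 * |x| ≤ L := by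
  simp only [Lambda1, Finset.mem_filter] at hx
  rcases abs_cases x with ⟨h, -⟩ | ⟨h, -⟩ <;> omega

lemma le_two_mul_natAbs_of_dvd {L : ℕ} {x n : ℤ} (hx : 2 * |x| ≤ L) (hdvd : (L : ℤ) ∣ x + n)
    (hne : x + n ≠ 0) : L ≤ 2 * n.natAbs := by
  obtain ⟨c, hc⟩ := hdvd
  have hc0 : c ≠ 0 := by rintro rfl; simp_all
  have hL : (L : ℤ) ≤ |x + n| := by
    rw [hc, abs_mul, Nat.abs_cast]
    exact le_mul_of_one_le_right (by positivity) (Int.one_le_abs hc0)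
  have := abs_add_le x n
  have := Int.abs_eq_natAbs n
  omega

lemma eTwoPiI_add (s t : ℝ) : eTwoPiI (s + t) = eTwoPiI s * eTwoPiI t := by
  rw [eTwoPiI, eTwoPiI, eTwoPiI, ← Complex.exp_add]
  push_cast
  ring_nf

lemma eTwoPiI_int_mul (n : ℤ) (s : ℝ) : eTwoPiI (n * s) = eTwoPiI s ^ n := by
  rw [eTwoPiI, eTwoPiI, ← Complex.exp_int_mul]
  push_cast
  ring_nf

lemma eTwoPiI_int (n : ℤ) : eTwoPiI n = 1 := by
  simpa [eTwoPiI, mul_comm] using Complex.exp_int_mul_two_pi_mul_I n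

lemma eTwoPiI_eq_one_iff {s : ℝ} : eTwoPiI s = 1 ↔ ∃ n : ℤ, s = n := by
  rw [eTwoPiI, Complex.exp_eq_one_iff]
  refine exists_congr fun n => ⟨fun h => ?_, fun h => by rw [h]; push_cast; ring⟩
  have h' : ((s : ℝ) : ℂ) = (n : ℝ) := by
    apply mul_left_cancel₀ (show 2 * (Real.pi : ℂ) * Complex.I ≠ 0 by simp [Real.pi_ne_zero])
    push_cast
    linear_combination h
  exact_mod_cast h'

lemma norm_eTwoPiI (s : ℝ) : ‖eTwoPiI s‖ = 1 := by
  simpa [eTwoPiI, mul_comm, mul_left_comm] using Complex.norm_exp_ofReal_mul_I (2 * Real.pi * s)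

lemma sum_Lambda1_eTwoPiI {L : ℕ} (hL : L ≠ 0) (N : ℤ) :
    ∑ m ∈ Lambda1 L, eTwoPiI (N * ((m : ℝ) / L)) = if (L : ℤ) ∣ N then (L : ℂ) else 0 := by
  set ζ := eTwoPiI (N / L)
  have hterm (m : ℤ) : eTwoPiI (N * ((m : ℝ) / L)) = ζ ^ m := by
    rw [← eTwoPiI_int_mul]; ring_nf
  have hζL : ζ ^ (L : ℤ) = 1 := by
    rw [← eTwoPiI_int_mul, Int.cast_natCast, mul_div_cancel₀ _ (Nat.cast_ne_zero.mpr hL),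
      eTwoPiI_int]
  simp_rw [hterm]
  split_ifs with hdvd
  · obtain ⟨c, rfl⟩ := hdvd
    have hζ : ζ = 1 := eTwoPiI_eq_one_iff.mpr ⟨c, by push_cast; field_simp⟩
    simp [hζ, card_Lambda1]
  · have hζ : ζ ≠ 1 := by
      rw [Ne, eTwoPiI_eq_one_iff]
      rintro ⟨c, hc⟩
      apply hdvd
      refine ⟨c, ?_⟩
      rw [div_eq_iff (by exact_mod_cast hL)] at hc
      exact_mod_cast hc.trans (mul_comm _ _)
    set lo : ℤ := (L : ℤ) / 2 - L + 1
    have himg : Lambda1 L = (Finset.range L).image (fun i : ℕ => lo + i) := by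
      ext m
      simp only [Lambda1_eq_Icc, Finset.mem_Icc, Finset.mem_image, Finset.mem_range]
      exact ⟨fun h => ⟨(m - lo).toNat, by omega, by omega⟩, by rintro ⟨i, hi, rfl⟩; omega⟩
    have hζ0 : ζ ≠ 0 := Complex.exp_ne_zero _
    rw [himg, Finset.sum_image (fun i _ j _ h => by simpa using h)]
    simp_rw [zpow_add₀ hζ0, zpow_natCast]
    rw [← Finset.mul_sum, geom_sum_eq hζ, ← zpow_natCast, hζL]
    simp

lemma integral_eTwoPiI_int_mul (N : ℤ) :
    ∫ k in (-(1 : ℝ) / 2)..(1 / 2), eTwoPiI (N * k) = if N = 0 then 1 else 0 := by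
  split_ifs with hN
  · norm_num [hN, eTwoPiI]
  · have hc : 2 * Real.pi * Complex.I * N ≠ 0 := by simp [Real.pi_ne_zero, hN]
    have hint := integral_exp_mul_complex (a := -(1 : ℝ) / 2) (b := 1 / 2) hc
    simp only [eTwoPiI]
    push_cast at hint ⊢
    simp_rw [← mul_assoc]
    rw [hint, div_eq_zero_iff, sub_eq_zero]
    left
    have h := eTwoPiI_add (N * (-(1 : ℝ) / 2)) N
    rw [eTwoPiI_int, mul_one, show (N : ℝ) * (-1 / 2) + N = N * (1 / 2) by ring] at h
    simpa [eTwoPiI, mul_assoc] using h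

def expProdTerm {𝔸 : Type*} [DivisionRing 𝔸] (x y : 𝔸) (z : ℕ × ℕ) : 𝔸 :=
  x ^ z.1 / z.1.factorial * (y ^ z.2 / z.2.factorial)

lemma hasSum_expProdTerm {𝔸 : Type*} [NormedDivisionRing 𝔸] [NormedAlgebra ℚ 𝔸] [CompleteSpace 𝔸]
    (x y : 𝔸) : HasSum (expProdTerm x y) (NormedSpace.exp x * NormedSpace.exp y) := by
  have hx := NormedSpace.expSeries_div_hasSum_exp x
  have hy := NormedSpace.expSeries_div_hasSum_exp y
  have hxy := summable_mul_of_summable_norm (NormedSpace.norm_expSeries_div_summable x)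
    (NormedSpace.norm_expSeries_div_summable y)
  exact HasSum.mul (f := fun n : ℕ => x ^ n / n.factorial) (g := fun n : ℕ => y ^ n / n.factorial)
    hx hy hxy

lemma norm_expProdTerm (x y : ℂ) (z : ℕ × ℕ) : ‖expProdTerm x y z‖ = expProdTerm ‖x‖ ‖y‖ z := by
  simp [expProdTerm]

lemma expProdTerm_nonneg {x y : ℝ} (hx : 0 ≤ x) (hy : 0 ≤ y) (z : ℕ × ℕ) :
    0 ≤ expProdTerm x y z := by
  unfold expProdTerm
  positivity

lemma expProdTerm_mul_pow_natAbs_le {t s : ℝ} (ht : 0 ≤ t) (hs : 0 < s) (z : ℕ × ℕ) :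
    expProdTerm t t z * s ^ ((z.1 : ℤ) - z.2).natAbs ≤
      expProdTerm (t * s) (t / s) z + expProdTerm (t / s) (t * s) z := by
  obtain ⟨a, b⟩ := z
  have hnn := expProdTerm_nonneg (mul_nonneg ht hs.le) (div_nonneg ht hs.le)
  have hnn' := expProdTerm_nonneg (div_nonneg ht hs.le) (mul_nonneg ht hs.le)
  rcases le_total b a with h | h
  · obtain ⟨k, rfl⟩ := Nat.exists_eq_add_of_le h
    refine le_add_of_le_of_nonneg (le_of_eq ?_) (hnn' _)
    simp only [expProdTerm, show ((b + k : ℕ) - b : ℤ).natAbs = k by omega, div_pow, mul_pow]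
    field_simp
    ring
  · obtain ⟨k, rfl⟩ := Nat.exists_eq_add_of_le h
    refine le_add_of_nonneg_of_le (hnn _) (le_of_eq ?_)
    simp only [expProdTerm, show (a - (a + k : ℕ) : ℤ).natAbs = k by omega, div_pow, mul_pow]
    field_simp
    ring

lemma hasSum_exp_two_mul_cos (w : ℂ) (s : ℝ) :
    HasSum (fun z : ℕ × ℕ => expProdTerm w w z * eTwoPiI (((z.1 : ℤ) - z.2 : ℤ) * s))
      (Complex.exp (2 * w * Complex.cos (2 * Real.pi * s))) := by
  have h := hasSum_expProdTerm (w * eTwoPiI s) (w * eTwoPiI (-s))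
  rw [← Complex.exp_eq_exp_ℂ, ← Complex.exp_add] at h
  have hcos : 2 * w * Complex.cos (2 * Real.pi * s) = w * eTwoPiI s + w * eTwoPiI (-s) := by
    rw [mul_assoc, mul_left_comm, Complex.two_cos, eTwoPiI, eTwoPiI]
    push_cast
    ring_nf
  rw [hcos]
  refine h.congr_fun fun z => ?_
  have he : eTwoPiI (((z.1 : ℤ) - z.2 : ℤ) * s) = eTwoPiI s ^ z.1 * eTwoPiI (-s) ^ z.2 := by
    rw [← zpow_natCast, ← zpow_natCast, ← eTwoPiI_int_mul, ← eTwoPiI_int_mul, ← eTwoPiI_add]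
    push_cast
    ring_nf
  rw [he]
  simp only [expProdTerm, mul_pow]
  ring

/-- `Q1` and `I1` are, definitionally, the dual-lattice average and the integral of this
function of `k`. -/
def propagatorSymbol (x : ℤ) (R u k : ℝ) : ℂ :=
  Complex.exp (2*Real.pi*Complex.I*((k*(x:ℝ) : ℝ):ℂ) +
    Complex.I*((R*Real.cos (2*Real.pi*(k+u)) : ℝ):ℂ))

lemma norm_propagatorSymbol (x : ℤ) (R u k : ℝ) : ‖propagatorSymbol x R u k‖ = 1 := by
  rw [propagatorSymbol,
    ← Complex.norm_exp_ofReal_mul_I (2 * Real.pi * (k * x) + R * Real.cos (2 * Real.pi * (k + u)))]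
  push_cast
  ring_nf

def symbolCoeff (R u : ℝ) (z : ℕ × ℕ) : ℂ :=
  expProdTerm (Complex.I * R / 2) (Complex.I * R / 2) z * eTwoPiI (((z.1 : ℤ) - z.2 : ℤ) * u)

lemma norm_symbolCoeff (R u : ℝ) (z : ℕ × ℕ) :
    ‖symbolCoeff R u z‖ = expProdTerm (|R| / 2) (|R| / 2) z := by
  simp [symbolCoeff, norm_expProdTerm, norm_eTwoPiI]

lemma hasSum_propagatorSymbol (x : ℤ) (R u k : ℝ) :
    HasSum (fun z : ℕ × ℕ => symbolCoeff R u z * eTwoPiI ((x + ((z.1 : ℤ) - z.2) : ℤ) * k))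
      (propagatorSymbol x R u k) := by
  have h := (hasSum_exp_two_mul_cos (Complex.I * R / 2) (k + u)).mul_left (eTwoPiI (k * x))
  have hsym : propagatorSymbol x R u k =
      eTwoPiI (k * x) *
        Complex.exp (2 * (Complex.I * R / 2) * Complex.cos (2 * Real.pi * ((k + u : ℝ) : ℂ))) := by
    unfold propagatorSymbol
    rw [Complex.exp_add, eTwoPiI]
    push_cast
    ring_nf
  rw [hsym]
  refine h.congr_fun fun z => ?_
  set f : ℤ := (z.1 : ℤ) - z.2
  rw [symbolCoeff, show ((x + f : ℤ) : ℝ) * k = k * x + f * k by push_cast; ring,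
    mul_add (f : ℝ), eTwoPiI_add, eTwoPiI_add]
  ring

lemma hasSum_lattice_average_of_hasSum_eTwoPiI {ι : Type*} {L : ℕ} (hL : L ≠ 0) {c : ι → ℂ}
    {n : ι → ℤ} {F : ℝ → ℂ} (hF : ∀ k, HasSum (fun i => c i * eTwoPiI (n i * k)) (F k)) :
    HasSum (fun i => c i * if (L : ℤ) ∣ n i then 1 else 0)
      ((L : ℂ)⁻¹ * ∑ m ∈ Lambda1 L, F ((m : ℝ) / L)) := by
  have h := (hasSum_sum (s := Lambda1 L) fun m _ => hF ((m : ℝ) / L)).mul_left (L : ℂ)⁻¹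
  refine h.congr_fun fun i => ?_
  rw [← Finset.mul_sum, sum_Lambda1_eTwoPiI hL]
  have : (L : ℂ) ≠ 0 := Nat.cast_ne_zero.mpr hL
  split_ifs
  · field_simp
  · simp

lemma hasSum_integral_of_hasSum_eTwoPiI {ι : Type*} [Countable ι] {c : ι → ℂ} {n : ι → ℤ}
    {F : ℝ → ℂ} (hc : Summable fun i => ‖c i‖)
    (hF : ∀ k, HasSum (fun i => c i * eTwoPiI (n i * k)) (F k)) :
    HasSum (fun i => c i * if n i = 0 then 1 else 0) (∫ k in (-(1 : ℝ) / 2)..(1 / 2), F k) := by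
  have h := intervalIntegral.hasSum_integral_of_dominated_convergence (μ := volume)
    (a := -(1 : ℝ) / 2) (b := 1 / 2)
    (F := fun i k => c i * eTwoPiI (n i * k)) (fun i _ => ‖c i‖)
    (fun i => (continuous_const.mul (by unfold eTwoPiI; fun_prop)).aestronglyMeasurable)
    (fun i => ae_of_all _ fun k _ => by rw [norm_mul, norm_eTwoPiI, mul_one])
    (ae_of_all _ fun _ _ => hc) intervalIntegrable_const (ae_of_all _ fun k _ => hF k)
  refine h.congr_fun fun i => ?_
  rw [intervalIntegral.integral_const_mul, integral_eTwoPiI_int_mul]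

lemma hasSum_Q1 {L : ℕ} (hL : L ≠ 0) (x : ℤ) (R u : ℝ) :
    HasSum (fun z : ℕ × ℕ => symbolCoeff R u z * if (L : ℤ) ∣ x + ((z.1 : ℤ) - z.2) then 1 else 0)
      (Q1 L x R u) :=
  hasSum_lattice_average_of_hasSum_eTwoPiI (F := propagatorSymbol x R u) hL
    (hasSum_propagatorSymbol x R u)

lemma hasSum_I1 (x : ℤ) (R u : ℝ) :
    HasSum (fun z : ℕ × ℕ => symbolCoeff R u z * if x + ((z.1 : ℤ) - z.2) = 0 then 1 else 0)
      (I1 x R u) := by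
  have hc : Summable fun z => ‖symbolCoeff R u z‖ := by
    simp_rw [norm_symbolCoeff]
    exact (hasSum_expProdTerm (|R| / 2) (|R| / 2)).summable
  exact hasSum_integral_of_hasSum_eTwoPiI (F := propagatorSymbol x R u) hc
    (hasSum_propagatorSymbol x R u)

lemma exp_le_two_pow_of_le_two_mul {L m : ℕ} (h : L ≤ 2 * m) :
    Real.exp (Real.log 2 / 2 * L) ≤ 2 ^ m := by
  have hL : (L : ℝ) ≤ 2 * m := by exact_mod_cast h
  calc Real.exp (Real.log 2 / 2 * L) ≤ Real.exp (m * Real.log 2) :=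
        Real.exp_le_exp.mpr (by nlinarith [Real.log_pos one_lt_two])
    _ = 2 ^ m := by rw [Real.exp_nat_mul, Real.exp_log two_pos]

lemma norm_Q1_sub_I1_le {L : ℕ} {x : ℤ} (hx : x ∈ Lambda1 L) (R u : ℝ) :
    ‖Q1 L x R u - I1 x R u‖ ≤ 2 * Real.exp (5 / 4 * |R| - Real.log 2 / 2 * L) := by
  have hL : L ≠ 0 := by
    rintro rfl
    simp only [Lambda1, Finset.mem_filter, Nat.cast_zero] at hx
    omega
  set t := |R| / 2 with ht_def
  set a := Real.log 2 / 2 * L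
  have ht : 0 ≤ t := by positivity
  have hmajorant := ((hasSum_expProdTerm (t * 2) (t / 2)).add
    (hasSum_expProdTerm (t / 2) (t * 2))).mul_left (Real.exp (-a))
  refine ((hasSum_Q1 hL x R u).sub (hasSum_I1 x R u)).norm_le_of_bounded hmajorant (fun z => ?_)
    |>.trans_eq ?_
  · rw [← mul_sub, norm_mul, norm_symbolCoeff]
    by_cases hn : (L : ℤ) ∣ x + ((z.1 : ℤ) - z.2) ∧ x + ((z.1 : ℤ) - z.2) ≠ 0
    · have hm := le_two_mul_natAbs_of_dvd (two_mul_abs_le_of_mem_Lambda1 hx) hn.1 hn.2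
      simp only [if_pos hn.1, if_neg hn.2, sub_zero, norm_one, mul_one]
      calc expProdTerm t t z = Real.exp (-a) * (expProdTerm t t z * Real.exp a) := by
            rw [Real.exp_neg]; field_simp
        _ ≤ Real.exp (-a) * (expProdTerm t t z * 2 ^ ((z.1 : ℤ) - z.2).natAbs) := by
            gcongr
            · exact expProdTerm_nonneg ht ht z
            · exact exp_le_two_pow_of_le_two_mul hm
        _ ≤ _ := by
            gcongr
            exact expProdTerm_mul_pow_natAbs_le ht two_pos z
    · have hzero : ((if (L : ℤ) ∣ x + ((z.1 : ℤ) - z.2) then 1 else 0) -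
          (if x + ((z.1 : ℤ) - z.2) = 0 then 1 else 0) : ℂ) = 0 := by
        by_cases h0 : x + ((z.1 : ℤ) - z.2) = 0
        · simp [h0]
        · simp [h0, show ¬(L : ℤ) ∣ x + ((z.1 : ℤ) - z.2) from fun h => hn ⟨h, h0⟩]
      rw [hzero, norm_zero, mul_zero]
      exact mul_nonneg (Real.exp_pos _).le (add_nonneg (expProdTerm_nonneg (by positivity)
        (by positivity) z) (expProdTerm_nonneg (by positivity) (by positivity) z))
  · rw [← Real.exp_eq_exp_ℝ, show 5 / 4 * |R| - a = -a + (t * 2 + t / 2) by rw [ht_def]; ring,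
      Real.exp_add, Real.exp_add]
    ring

lemma norm_Q1_le_one (L : ℕ) (x : ℤ) (R u : ℝ) : ‖Q1 L x R u‖ ≤ 1 := by
  change ‖(L : ℂ)⁻¹ * ∑ m ∈ Lambda1 L, propagatorSymbol x R u ((m : ℝ) / L)‖ ≤ 1
  rw [norm_mul, norm_inv, Complex.norm_natCast]
  refine inv_mul_le_one_of_le₀ ((norm_sum_le_of_le _ fun m _ =>
    (norm_propagatorSymbol x R u _).le).trans_eq ?_) (Nat.cast_nonneg L)
  simp [card_Lambda1]

lemma norm_I1_le_one (x : ℤ) (R u : ℝ) : ‖I1 x R u‖ ≤ 1 := by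
  change ‖∫ k in (-(1 : ℝ) / 2)..(1 / 2), propagatorSymbol x R u k‖ ≤ 1
  refine (intervalIntegral.norm_integral_le_of_norm_le_const fun k _ =>
    (norm_propagatorSymbol x R u k).le).trans_eq ?_
  norm_num

theorem Q1_I1_comparison :
    ∃ C : ℝ, 0 < C ∧ ∃ δ₀ : ℝ, 0 < δ₀ ∧
      ∀ (L : ℕ), 2 ≤ L → ∀ (R u : ℝ), ∀ x ∈ Lambda1 L,
        ‖Q1 L x R u - I1 x R u‖ ≤ C * Real.exp (-δ₀ * max ((L:ℝ) - 4*|R|) 0) := by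
  refine ⟨2, two_pos, Real.log 2 / 2, by positivity, fun L _ R u x hx => ?_⟩
  rcases le_total ((L : ℝ) - 4 * |R|) 0 with h | h
  · rw [max_eq_right h, mul_zero, Real.exp_zero, mul_one]
    linarith [norm_sub_le (Q1 L x R u) (I1 x R u), norm_Q1_le_one L x R u, norm_I1_le_one x R u]
  · rw [max_eq_left h]
    refine (norm_Q1_sub_I1_le hx R u).trans ?_
    gcongr
    nlinarith [Real.log_two_gt_d9, abs_nonneg R]

end KWP
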